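/- Let φ : T_OP(X, X') → T_OP(Y, Y') be a semigroup isomorphism. If α ∈ T_OP(X, X') has finite range, then φ(α) has finite range of the same cardinality: |ran(φ(α))| = |ran α|. -/

import Mathlib

/-!
The constant maps are the elements `z` with `z ∘ g = z` for all `g`, so `φ` maps constants to
constants and induces a bijection `θ : X' → Y'` with `θ (f a) = φ f (θ a)`. For `α` of finite
range, an order-preserving retraction `ε` of `X` onto `range α` is an idempotent with `ε ∘ α = α`.
Hence `range (φ α) ⊆ range (φ ε)`, whose points are fixed by `φ ε` and therefore are `θ`-images of
fixed points of `ε`, i.e. of points of `range α`. This gives `|ran φ(α)| ≤ |ran α|`, and the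
inverse isomorphism gives the reverse inequality.
-/

open Set Function

/-- The semigroup of order-preserving self-maps of `X` with range contained in `X'`. -/
def OPR {X : Type*} [LinearOrder X] (X' : Set X) : Set (X → X) :=
  {f | Monotone f ∧ Set.range f ⊆ X'}

/-- `φ` is a semigroup isomorphism from `T_OP(X, X')` onto `T_OP(Y, Y')`
(composition written left-to-right: `f * g = g ∘ f`). -/
def IsSgIso {X Y : Type*} [LinearOrder X] [LinearOrder Y] (X' : Set X) (Y' : Set Y)
    (φ : (X → X) → (Y → Y)) : Prop :=
  Set.BijOn φ (OPR X') (OPR Y') ∧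
    ∀ f ∈ OPR X', ∀ g ∈ OPR X', φ (g ∘ f) = φ g ∘ φ f

theorem Finset.exists_monotone_retraction {X : Type*} [LinearOrder X] (s : Finset X)
    (hs : s.Nonempty) : ∃ ε : X → X, Monotone ε ∧ (∀ x, ε x ∈ s) ∧ ∀ a ∈ s, ε a = a := by
  classical
  let below (x : X) : Finset X := insert (s.min' hs) (s.filter (· ≤ x))
  have below_subset (x : X) : below x ⊆ s :=
    Finset.insert_subset (s.min'_mem hs) (Finset.filter_subset _ _)
  refine ⟨fun x => (below x).max' (Finset.insert_nonempty _ _), ?_, ?_, ?_⟩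
  · intro x y hxy
    refine Finset.max'_subset _ (Finset.insert_subset_insert _ fun b hb => ?_)
    obtain ⟨hbs, hbx⟩ := Finset.mem_filter.mp hb
    exact Finset.mem_filter.mpr ⟨hbs, hbx.trans hxy⟩
  · exact fun x => below_subset x (Finset.max'_mem _ _)
  · intro a ha
    show (below a).max' _ = a
    refine le_antisymm (Finset.max'_le _ _ _ fun b hb => ?_) ?_
    · rcases Finset.mem_insert.mp hb with rfl | hb
      · exact s.min'_le a ha
      · exact (Finset.mem_filter.mp hb).2
    · have ha_below : a ∈ below a :=
        Finset.mem_insert_of_mem (Finset.mem_filter.mpr ⟨ha, le_rfl⟩)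
      exact Finset.le_max' _ a ha_below

/-- `z ∘ g = z` for all `g ∈ S`: in the paper's left-to-right notation `g * z = z`, so `z` is a
right zero of `S`. -/
def IsRightZero {α : Type*} (S : Set (α → α)) (z : α → α) : Prop :=
  z ∈ S ∧ ∀ g ∈ S, z ∘ g = z

/-- The map `θ_φ : X' → Y'` given by `φ (const a) = const (θ_φ a)`, read off at any point `b₀`. -/
def pointMap {X Y : Type*} (φ : (X → X) → (Y → Y)) (b₀ : Y) (a : X) : Y :=
  φ (const X a) b₀

section

variable {X Y : Type*} [LinearOrder X] [LinearOrder Y] {X' : Set X} {Y' : Set Y}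

theorem const_mem_OPR {a : X} (ha : a ∈ X') : const X a ∈ OPR X' :=
  ⟨monotone_const, range_subset_iff.mpr fun _ => ha⟩

theorem comp_mem_OPR {f g : X → X} (hf : f ∈ OPR X') (hg : g ∈ OPR X') : g ∘ f ∈ OPR X' :=
  ⟨hg.1.comp hf.1, (range_comp_subset_range f g).trans hg.2⟩

theorem isRightZero_OPR_iff (hX' : X'.Nonempty) {z : X → X} :
    IsRightZero (OPR X') z ↔ ∃ a ∈ X', z = const X a := by
  constructor
  · rintro ⟨hz, hzero⟩
    obtain ⟨a₀, ha₀⟩ := hX'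
    exact ⟨z a₀, hz.2 (mem_range_self a₀), (hzero _ (const_mem_OPR ha₀)).symm⟩
  · rintro ⟨a, ha, rfl⟩
    exact ⟨const_mem_OPR ha, fun _ _ => const_comp⟩

namespace IsSgIso

variable {φ : (X → X) → (Y → Y)} (hφ : IsSgIso X' Y' φ)
include hφ

theorem isRightZero_map_iff {f : X → X} (hf : f ∈ OPR X') :
    IsRightZero (OPR Y') (φ f) ↔ IsRightZero (OPR X') f := by
  constructor
  · refine fun ⟨_, hzero⟩ => ⟨hf, fun g hg => hφ.1.injOn (comp_mem_OPR hg hf) hf ?_⟩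
    rw [hφ.2 g hg f hf, hzero _ (hφ.1.mapsTo hg)]
  · rintro ⟨_, hzero⟩
    refine ⟨hφ.1.mapsTo hf, fun g' hg' => ?_⟩
    obtain ⟨g, hg, rfl⟩ := hφ.1.surjOn hg'
    rw [← hφ.2 g hg f hf, hzero g hg]

theorem map_const {b₀ : Y} (hb₀ : b₀ ∈ Y') {a : X} (ha : a ∈ X') :
    φ (const X a) = const Y (pointMap φ b₀ a) := by
  have hzero := (hφ.isRightZero_map_iff (const_mem_OPR ha)).mpr
    ((isRightZero_OPR_iff ⟨a, ha⟩).mpr ⟨a, ha, rfl⟩)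
  obtain ⟨b, -, hb⟩ := (isRightZero_OPR_iff ⟨b₀, hb₀⟩).mp hzero
  rw [pointMap, hb, const_apply]

theorem pointMap_apply {b₀ : Y} {f : X → X} (hf : f ∈ OPR X') {a : X} (ha : a ∈ X') :
    pointMap φ b₀ (f a) = φ f (pointMap φ b₀ a) := by
  rw [pointMap, ← comp_const, hφ.2 _ (const_mem_OPR ha) f hf]
  rfl

theorem bijOn_pointMap (hX' : X'.Nonempty) {b₀ : Y} (hb₀ : b₀ ∈ Y') :
    BijOn (pointMap φ b₀) X' Y' := by
  refine ⟨fun a ha => (hφ.1.mapsTo (const_mem_OPR ha)).2 (mem_range_self b₀), ?_, ?_⟩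
  · intro a ha a' ha' h
    have := hφ.1.injOn (const_mem_OPR ha) (const_mem_OPR ha')
      (by rw [hφ.map_const hb₀ ha, hφ.map_const hb₀ ha', h])
    exact congrFun this a
  · intro b hb
    obtain ⟨f, hf, hfb⟩ := hφ.1.surjOn (const_mem_OPR hb)
    have hzero : IsRightZero (OPR Y') (φ f) :=
      hfb ▸ (isRightZero_OPR_iff ⟨b, hb⟩).mpr ⟨b, hb, rfl⟩
    obtain ⟨a, ha, rfl⟩ := (isRightZero_OPR_iff hX').mp ((hφ.isRightZero_map_iff hf).mp hzero)
    exact ⟨a, ha, by rw [pointMap, hfb, const_apply]⟩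

theorem range_map_subset_image_pointMap (hX' : X'.Nonempty) {b₀ : Y} (hb₀ : b₀ ∈ Y')
    {α : X → X} (hα : α ∈ OPR X') (hfin : (range α).Finite) :
    range (φ α) ⊆ pointMap φ b₀ '' range α := by
  have hθ := hφ.bijOn_pointMap hX' hb₀
  obtain ⟨a₀, ha₀⟩ := hX'
  obtain ⟨ε, hmono, hε_mem, hε_fix⟩ :=
    hfin.toFinset.exists_monotone_retraction ⟨α a₀, by simp⟩
  simp only [Finite.mem_toFinset] at hε_mem hε_fix
  have hε : ε ∈ OPR X' := ⟨hmono, range_subset_iff.mpr fun x => hα.2 (hε_mem x)⟩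
  have hεα : ε ∘ α = α := funext fun x => hε_fix _ (mem_range_self x)
  have hεε : φ ε ∘ φ ε = φ ε := by
    rw [← hφ.2 ε hε ε hε, show ε ∘ ε = ε from funext fun x => hε_fix _ (hε_mem x)]
  have hsub : range (φ α) ⊆ range (φ ε) := by
    rw [← hεα, hφ.2 α hα ε hε]
    exact range_comp_subset_range _ _
  rintro _ ⟨y, rfl⟩
  obtain ⟨a, ha, hab⟩ := hθ.surjOn ((hφ.1.mapsTo hε).2 (hsub (mem_range_self y)))
  obtain ⟨x, hx⟩ := hsub (mem_range_self y)
  -- `θ a` is fixed by `φ ε`, so `a` is fixed by `ε`.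
  have hfix : ε a = a := hθ.injOn (hε.2 (mem_range_self a)) ha <| by
    rw [hφ.pointMap_apply hε ha, hab, ← hx, ← comp_apply (f := φ ε), hεε]
  exact ⟨a, hfix ▸ hε_mem a, hab⟩

theorem ncard_range_map_le (hX' : X'.Nonempty) (hY' : Y'.Nonempty) {α : X → X}
    (hα : α ∈ OPR X') (hfin : (range α).Finite) :
    (range (φ α)).Finite ∧ (range (φ α)).ncard ≤ (range α).ncard := by
  obtain ⟨b₀, hb₀⟩ := hY'
  have hsub := hφ.range_map_subset_image_pointMap hX' hb₀ hα hfin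
  refine ⟨(hfin.image _).subset hsub, ?_⟩
  calc (range (φ α)).ncard ≤ (pointMap φ b₀ '' range α).ncard :=
        ncard_le_ncard hsub (hfin.image _)
    _ = (range α).ncard := ((hφ.bijOn_pointMap hX' hb₀).injOn.mono hα.2).ncard_image

theorem exists_inverse : ∃ ψ, IsSgIso Y' X' ψ ∧ ∀ f ∈ OPR X', ψ (φ f) = f := by
  have : Nonempty (X → X) := ⟨id⟩
  have hinv : InvOn (invFunOn φ (OPR X')) φ (OPR X') (OPR Y') := hφ.1.invOn_invFunOn
  have hbij : BijOn (invFunOn φ (OPR X')) (OPR Y') (OPR X') := hφ.1.symm ⟨hinv.2, hinv.1⟩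
  refine ⟨_, ⟨hbij, fun f hf g hg => hφ.1.injOn (hbij.mapsTo (comp_mem_OPR hf hg))
    (comp_mem_OPR (hbij.mapsTo hf) (hbij.mapsTo hg)) ?_⟩, fun f hf => hinv.1 hf⟩
  rw [hφ.2 _ (hbij.mapsTo hf) _ (hbij.mapsTo hg), hinv.2 hf, hinv.2 hg,
    hinv.2 (comp_mem_OPR hf hg)]

end IsSgIso

end

/-- an isomorphism preserves finiteness and cardinality of ranges. -/
theorem stmt_13 {X Y : Type*} [LinearOrder X] [LinearOrder Y] (X' : Set X) (Y' : Set Y)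
    (hX' : X'.Nontrivial) (hY' : Y'.Nontrivial)
    (φ : (X → X) → (Y → Y)) (hφ : IsSgIso X' Y' φ) :
    ∀ α ∈ OPR X', (Set.range α).Finite →
      (Set.range (φ α)).Finite ∧ (Set.range (φ α)).ncard = (Set.range α).ncard := by
  intro α hα hfin
  obtain ⟨hfin', hle⟩ := hφ.ncard_range_map_le hX'.nonempty hY'.nonempty hα hfin
  obtain ⟨ψ, hψ, hψφ⟩ := hφ.exists_inverse
  have hge := hψ.ncard_range_map_le hY'.nonempty hX'.nonempty (hφ.1.mapsTo hα) hfin'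
  rw [hψφ α hα] at hge
  exact ⟨hfin', hle.antisymm hge.2⟩
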